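/- Let n ≥ 1. Suppose v, f : ℝ^n×(0,∞) → [0,∞) are nonnegative locally integrable functions with (∂_t − Δ)v ≥ f in the sense of distributions on ℝ^n×(0,∞). Let φ ∈ C_c^∞(B₁(0)) and ψ ∈ C_c^∞((−1,1)) be nonnegative with φ = 1 on B_{1/2}(0), ψ = 1 on [0,1/2), and φ, ψ ≤ 1, and let β > 2. Then there exists a constant C > 0 (independent of R and t₀) such that for all R > 1 and t₀ > 0, setting φ_R(x) := φ(x/R)^β, ψ_R(t) := ψ((t−t₀)/R²)^β, and Q_R := (B_R(0)×(t₀, t₀+R²)) \ (B_{R/2}(0)×(t₀, t₀+R²/2)), one has ∫_{t₀}^∞ ∫_{ℝ^n} f·φ_R·ψ_R dx dt ≤ (C/R²)·∬_{Q_R} v·(φ_R ψ_R)^{(β−2)/β} dx dt. -/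

import Mathlib

open MeasureTheory Real Set
open scoped ENNReal

/-- Spatial Laplacian of `φ : ℝ^n × ℝ → ℝ`, computed as the sum of the second derivatives
along the coordinate directions. -/
noncomputable def lapSpace (n : ℕ) (φ : EuclideanSpace ℝ (Fin n) × ℝ → ℝ)
    (x : EuclideanSpace ℝ (Fin n)) (t : ℝ) : ℝ :=
  ∑ i : Fin n,
    deriv (fun s : ℝ =>
      deriv (fun r : ℝ => φ (x + r • EuclideanSpace.single i (1 : ℝ), t)) s) 0

/-- The adjoint heat operator `-∂_t φ - Δφ` applied to a function on `ℝ^n × ℝ`. -/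
noncomputable def heatAdjoint (n : ℕ) (φ : EuclideanSpace ℝ (Fin n) × ℝ → ℝ)
    (q : EuclideanSpace ℝ (Fin n) × ℝ) : ℝ :=
  -(deriv (fun s : ℝ => φ (q.1, s)) q.2) - lapSpace n φ q.1 q.2

/-- A smooth compactly supported test function on `ℝ^n × (0,∞)`. -/
def IsTestOn (n : ℕ) (φ : EuclideanSpace ℝ (Fin n) × ℝ → ℝ) : Prop :=
  ContDiff ℝ (⊤ : ℕ∞) φ ∧ HasCompactSupport φ ∧
    tsupport φ ⊆ {q : EuclideanSpace ℝ (Fin n) × ℝ | 0 < q.2}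

/-- `(∂_t - Δ) v ≥ h` in the sense of distributions on `ℝ^n × (0,∞)`. -/
def DistribHeatGe (n : ℕ) (v h : EuclideanSpace ℝ (Fin n) → ℝ → ℝ) : Prop :=
  ∀ φ : EuclideanSpace ℝ (Fin n) × ℝ → ℝ, IsTestOn n φ → (∀ q, 0 ≤ φ q) →
    ∫ q in {q : EuclideanSpace ℝ (Fin n) × ℝ | 0 < q.2}, h q.1 q.2 * φ q ≤
    ∫ q in {q : EuclideanSpace ℝ (Fin n) × ℝ | 0 < q.2}, v q.1 q.2 * heatAdjoint n φ q

/-- `(∂_t - Δ) v = h` in the sense of distributions on `ℝ^n × (0,∞)`. -/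
def DistribHeatEq (n : ℕ) (v h : EuclideanSpace ℝ (Fin n) → ℝ → ℝ) : Prop :=
  ∀ φ : EuclideanSpace ℝ (Fin n) × ℝ → ℝ, IsTestOn n φ →
    ∫ q in {q : EuclideanSpace ℝ (Fin n) × ℝ | 0 < q.2}, v q.1 q.2 * heatAdjoint n φ q =
    ∫ q in {q : EuclideanSpace ℝ (Fin n) × ℝ | 0 < q.2}, h q.1 q.2 * φ q

/-!
Test the inequality against `χ(x, t) = φ(x/R)^m ψ((t - t₀)/R²)^m z(t)` with `m = ⌊β⌋₊`: a natural
power keeps `χ` smooth, and `φ_R ψ_R ≤ χ` wherever `z = 1`. Here `z` is a smooth nondecreasing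
switch from `0` at `t₀` to `1` at `t₀ + δ`, which makes `χ` an admissible test function on
`t > 0`. In `-∂ₜχ - Δχ` the terms containing `z'` and `|∇φ|²` are nonpositive and are dropped.
Every remaining term carries a factor `R⁻²` from the scaling, a derivative of `ψ` or of `φ`, so it
lives on `Q_R`, and at least `m - 1 ≥ β - 2` powers of `φ(x/R)` and of `ψ`, which are bounded by
`(φ_R ψ_R)^((β - 2)/β)`. Letting `δ → 0` by monotone convergence gives the estimate on `t > t₀`.
-/

open Laplacian InnerProductSpace Topology

section LineDerivatives

variable {E : Type*} [NormedAddCommGroup E] [NormedSpace ℝ E]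

theorem deriv_comp_line {g : E → ℝ} (hg : Differentiable ℝ g) (x e : E) :
    deriv (fun r : ℝ => g (x + r • e)) = fun s => fderiv ℝ g (x + s • e) e := by
  funext s
  have hline : HasDerivAt (fun r : ℝ => x + r • e) e s := by
    simpa using ((hasDerivAt_id s).smul_const e).const_add x
  exact ((hg _).hasFDerivAt.comp_hasDerivAt s hline).deriv

theorem deriv_deriv_comp_line {g : E → ℝ} (hg : ContDiff ℝ 2 g) (x e : E) :
    deriv (deriv fun r : ℝ => g (x + r • e)) 0 = iteratedFDeriv ℝ 2 g x ![e, e] := by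
  have hg1 : Differentiable ℝ (fun z => fderiv ℝ g z e) :=
    ((hg.fderiv_right (m := 1) (by norm_num)).clm_apply contDiff_const).differentiable
      (by norm_num)
  rw [deriv_comp_line (hg.differentiable (by norm_num)), deriv_comp_line hg1,
    iteratedFDeriv_two_apply]
  simp only [zero_smul, add_zero, Matrix.cons_val_zero, Matrix.cons_val_one]
  rw [fderiv_clm_apply ((hg.fderiv_right (m := 1) (by norm_num)).differentiable
    (by norm_num) x) (differentiableAt_const e)]
  simp

end LineDerivatives

theorem deriv_deriv_pow_ge {h : ℝ → ℝ} (hh : ContDiff ℝ 2 h) {s : ℝ} (hs : 0 ≤ h s) (m : ℕ) :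
    m * h s ^ (m - 1) * deriv (deriv h) s ≤ deriv (deriv fun r => h r ^ m) s := by
  obtain ⟨hd, -, hh'⟩ := contDiff_succ_iff_deriv (n := 1).mp hh
  have hd' : Differentiable ℝ (deriv h) := hh'.differentiable (by norm_num)
  have hpow : deriv (fun r => h r ^ m) = fun r => m * h r ^ (m - 1) * deriv h r :=
    funext fun r => ((hd r).hasDerivAt.pow m).deriv
  have hder := (((hd s).hasDerivAt.fun_pow (m - 1)).const_mul (m : ℝ)).fun_mul (hd' s).hasDerivAt
  rw [hpow, hder.deriv]
  have hsq : 0 ≤ (m : ℝ) * ((m - 1 : ℕ) * h s ^ (m - 1 - 1) * deriv h s) * deriv h s := by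
    rw [show (m : ℝ) * ((m - 1 : ℕ) * h s ^ (m - 1 - 1) * deriv h s) * deriv h s =
      m * (m - 1 : ℕ) * h s ^ (m - 1 - 1) * (deriv h s) ^ 2 by ring]
    positivity
  linarith

theorem neg_deriv_pow_mul_le {b z : ℝ → ℝ} {t : ℝ} (hb : DifferentiableAt ℝ b t)
    (hz : DifferentiableAt ℝ z t) (hb0 : 0 ≤ b t) (hz' : 0 ≤ deriv z t) (m : ℕ) :
    -deriv (fun s => b s ^ m * z s) t ≤ -(m * b t ^ (m - 1) * deriv b t * z t) := by
  rw [((hb.hasDerivAt.fun_pow m).fun_mul hz.hasDerivAt).deriv]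
  have : 0 ≤ b t ^ m * deriv z t := by positivity
  linarith

section Laplacian

variable {E : Type*} [NormedAddCommGroup E] [InnerProductSpace ℝ E] [FiniteDimensional ℝ E]

theorem laplacian_eq_sum_deriv_deriv_line {ι : Type*} [Fintype ι] (b : OrthonormalBasis ι ℝ E)
    {g : E → ℝ} (hg : ContDiff ℝ 2 g) (x : E) :
    Δ g x = ∑ i, deriv (deriv fun r : ℝ => g (x + r • b i)) 0 := by
  simp only [laplacian_eq_iteratedFDeriv_orthonormalBasis g b, deriv_deriv_comp_line hg]

theorem laplacian_comp_smul {g : E → ℝ} (hg : ContDiff ℝ 2 g) (c : ℝ) (x : E) :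
    Δ (fun y => g (c • y)) x = c ^ 2 * Δ g (c • x) := by
  let b := stdOrthonormalBasis ℝ E
  have hgc : ContDiff ℝ 2 (fun y => g (c • y)) := hg.comp (contDiff_const_smul c)
  rw [laplacian_eq_sum_deriv_deriv_line b hgc, laplacian_eq_sum_deriv_deriv_line b hg,
    Finset.mul_sum]
  refine Finset.sum_congr rfl fun i _ => ?_
  have hline : (fun r : ℝ => g (c • (x + r • b i))) = fun r => g (c • x + (c * r) • b i) := by
    funext r; rw [smul_add, smul_smul]
  have hd : deriv (fun r : ℝ => g (c • x + (c * r) • b i)) =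
      fun r => c * deriv (fun r : ℝ => g (c • x + r • b i)) (c * r) := by
    funext r; exact deriv_comp_mul_left (f := fun r : ℝ => g (c • x + r • b i)) c r
  rw [hline, hd, deriv_const_mul_field']
  simp only [deriv_comp_mul_left (f := deriv fun r : ℝ => g (c • x + r • b i)), mul_zero,
    smul_eq_mul, sq, mul_assoc]

theorem laplacian_pow_ge {g : E → ℝ} (hg : ContDiff ℝ 2 g) {x : E} (hx : 0 ≤ g x) (m : ℕ) :
    m * g x ^ (m - 1) * Δ g x ≤ Δ (fun y => g y ^ m) x := by
  let b := stdOrthonormalBasis ℝ E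
  rw [laplacian_eq_sum_deriv_deriv_line b hg, laplacian_eq_sum_deriv_deriv_line b (hg.pow m),
    Finset.mul_sum]
  refine Finset.sum_le_sum fun i _ => ?_
  have hline : ContDiff ℝ 2 fun r : ℝ => g (x + r • b i) :=
    hg.comp (contDiff_const.add (contDiff_id.smul contDiff_const))
  simpa using deriv_deriv_pow_ge hline (s := 0) (by simpa using hx) m

theorem laplacian_eq_zero_of_eventuallyEq_const {g : E → ℝ} {x : E} {c : ℝ}
    (h : g =ᶠ[𝓝 x] fun _ => c) : Δ g x = 0 := by
  simpa using (laplacian_congr_nhds h).eq_of_nhds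

theorem ContDiff.continuous_laplacian {g : E → ℝ} (hg : ContDiff ℝ 2 g) : Continuous (Δ g) := by
  have := hg.continuous_iteratedFDeriv (m := 2) le_rfl
  rw [laplacian_eq_iteratedFDeriv_stdOrthonormalBasis]
  fun_prop

theorem HasCompactSupport.laplacian {g : E → ℝ} (hg : HasCompactSupport g) :
    HasCompactSupport (Δ g) :=
  hg.mono' fun _ hx => by_contra fun hx' =>
    hx (laplacian_eq_zero_of_eventuallyEq_const (notMem_tsupport_iff_eventuallyEq.mp hx'))

end Laplacian

theorem heatAdjoint_mul_separated {n : ℕ} {A : EuclideanSpace ℝ (Fin n) → ℝ}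
    (hA : ContDiff ℝ 2 A) (Θ : ℝ → ℝ) (q : EuclideanSpace ℝ (Fin n) × ℝ) :
    heatAdjoint n (fun p => A p.1 * Θ p.2) q = -(A q.1 * deriv Θ q.2) - Δ A q.1 * Θ q.2 := by
  simp only [heatAdjoint, lapSpace, deriv_const_mul_field', deriv_mul_const_field',
    laplacian_eq_sum_deriv_deriv_line (EuclideanSpace.basisFun (Fin n) ℝ) hA,
    EuclideanSpace.basisFun_apply, Finset.sum_mul]

theorem pow_le_rpow_of_le_one {a c : ℝ} (ha₀ : 0 ≤ a) (ha₁ : a ≤ 1) (hc : 0 ≤ c) {j : ℕ}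
    (hcj : c ≤ j) : a ^ j ≤ a ^ c := by
  rw [← Real.rpow_natCast]
  exact Real.rpow_le_rpow_of_exponent_ge' ha₀ ha₁ hc hcj

theorem rpow_le_pow_of_le_one {a c : ℝ} (ha₀ : 0 ≤ a) (ha₁ : a ≤ 1) {j : ℕ} (hjc : j ≤ c) :
    a ^ c ≤ a ^ j := by
  rw [← Real.rpow_natCast]
  exact Real.rpow_le_rpow_of_exponent_ge' ha₀ ha₁ j.cast_nonneg hjc

theorem rpow_mul_rpow_rpow_div {a b β : ℝ} (ha : 0 ≤ a) (hb : 0 ≤ b) (hβ : β ≠ 0) (γ : ℝ) :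
    (a ^ β * b ^ β) ^ (γ / β) = a ^ γ * b ^ γ := by
  rw [← Real.mul_rpow ha hb, ← Real.rpow_mul (mul_nonneg ha hb), mul_div_cancel₀ _ hβ,
    Real.mul_rpow ha hb]

namespace MeasureTheory

variable {α : Type*} [MeasurableSpace α] {μ : Measure α}

theorem ofReal_integral_le_lintegral_ofReal (g : α → ℝ) :
    ENNReal.ofReal (∫ a, g a ∂μ) ≤ ∫⁻ a, ENNReal.ofReal (g a) ∂μ := by
  by_cases hg : Integrable g μ
  · calc ENNReal.ofReal (∫ a, g a ∂μ) ≤ ENNReal.ofReal (∫ a, max (g a) 0 ∂μ) :=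
          ENNReal.ofReal_le_ofReal (integral_mono hg hg.pos_part fun a => le_max_left _ _)
      _ = ∫⁻ a, ENNReal.ofReal (max (g a) 0) ∂μ :=
          ofReal_integral_eq_lintegral_ofReal hg.pos_part (ae_of_all _ fun a => le_max_right _ _)
      _ = ∫⁻ a, ENNReal.ofReal (g a) ∂μ := by simp
  · simp [integral_undef hg]

theorem setLIntegral_lt_le_of_forall_add_le {g : α → ℝ} (hg : Measurable g) {c : ℝ}
    {F : α → ℝ≥0∞} {B : ℝ≥0∞} (h : ∀ δ > 0, ∫⁻ a in {a | c + δ ≤ g a}, F a ∂μ ≤ B) :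
    ∫⁻ a in {a | c < g a}, F a ∂μ ≤ B := by
  set s : ℕ → Set α := fun k => {a | c + 1 / ((k : ℝ) + 1) ≤ g a}
  have hs : Monotone s := fun k l hkl a (ha : _ ≤ g a) =>
    show _ ≤ g a from (add_le_add_right (Nat.one_div_le_one_div hkl) c).trans ha
  have hm : ∀ k, MeasurableSet (s k) := fun k => measurableSet_le measurable_const hg
  have hunion : {a | c < g a} = ⋃ k, s k := by
    ext a
    rw [mem_iUnion]
    refine ⟨fun (ha : c < g a) => ?_, fun ⟨k, (hk : _ ≤ g a)⟩ => show c < g a by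
      linarith [Nat.one_div_pos_of_nat (α := ℝ) (n := k)]⟩
    obtain ⟨k, hk⟩ := exists_nat_one_div_lt (sub_pos.mpr ha)
    exact ⟨k, show _ ≤ g a by linarith⟩
  rw [hunion, ← withDensity_apply _ (MeasurableSet.iUnion hm), hs.measure_iUnion]
  exact iSup_le fun k => (withDensity_apply _ (hm k)).trans_le (h _ Nat.one_div_pos_of_nat)

theorem setLIntegral_ofReal_mul_le_of_le_indicator {v H w : α → ℝ} {s t : Set α} {c : ℝ}
    (hv : ∀ a, 0 ≤ v a) (hc : 0 ≤ c) (hH : ∀ a, H a ≤ c * s.indicator w a) :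
    ∫⁻ a in t, ENNReal.ofReal (v a * H a) ∂μ ≤
      ENNReal.ofReal c * ∫⁻ a in s, ENNReal.ofReal (v a * w a) ∂μ := by
  calc ∫⁻ a in t, ENNReal.ofReal (v a * H a) ∂μ
      ≤ ∫⁻ a, ENNReal.ofReal c * s.indicator (fun a => ENNReal.ofReal (v a * w a)) a ∂μ := by
        refine (setLIntegral_le_lintegral _ _).trans (lintegral_mono fun a => ?_)
        have hHa := hH a
        by_cases ha : a ∈ s
        · rw [indicator_of_mem ha] at hHa ⊢
          rw [← ENNReal.ofReal_mul hc]
          exact ENNReal.ofReal_le_ofReal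
            ((mul_le_mul_of_nonneg_left hHa (hv a)).trans_eq (by ring))
        · rw [indicator_of_notMem ha, mul_zero] at hHa ⊢
          exact (ENNReal.ofReal_eq_zero.mpr (mul_nonpos_of_nonneg_of_nonpos (hv a) hHa)).le
    _ ≤ _ := by
        rw [lintegral_const_mul' _ _ ENNReal.ofReal_ne_top]
        exact mul_le_mul_of_nonneg_left (lintegral_indicator_le _ _) zero_le

variable [TopologicalSpace α] [OpensMeasurableSpace α] [T2Space α]

theorem LocallyIntegrableOn.integrableOn_mul_of_tsupport_subset {f g : α → ℝ} {U : Set α}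
    (hf : LocallyIntegrableOn f U μ) (hg : Continuous g) (hgc : HasCompactSupport g)
    (hgU : tsupport g ⊆ U) : IntegrableOn (fun a => f a * g a) U μ := by
  have hK : IntegrableOn (fun a => f a * g a) (tsupport g) μ :=
    (hf.integrableOn_compact_subset hgU hgc).mul_continuousOn hg.continuousOn hgc
  refine (hK.integrable_of_forall_notMem_eq_zero fun a ha => ?_).integrableOn
  rw [image_eq_zero_of_notMem_tsupport ha, mul_zero]

end MeasureTheory

/-- The region `Q_R` of the statement, where the derivatives of the cutoff live. -/
def parabolicAnnulus (n : ℕ) (R t₀ : ℝ) : Set (EuclideanSpace ℝ (Fin n) × ℝ) :=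
  (Metric.ball 0 R ×ˢ Ioo t₀ (t₀ + R ^ 2)) \ (Metric.ball 0 (R / 2) ×ˢ Ioo t₀ (t₀ + R ^ 2 / 2))

theorem parabolicAnnulus_eq_preimage {n : ℕ} {R : ℝ} (hR : 0 < R) (t₀ : ℝ) :
    parabolicAnnulus n R t₀ =
      (fun q => (R⁻¹ • q.1, (q.2 - t₀) / R ^ 2)) ⁻¹' parabolicAnnulus n 1 0 := by
  ext q
  have hR2 : 0 < R ^ 2 := by positivity
  simp only [parabolicAnnulus, mem_preimage, Set.mem_sdiff, mem_prod, mem_ball_zero_iff,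
    mem_Ioo, norm_smul, norm_inv, Real.norm_eq_abs, abs_of_pos hR, inv_mul_lt_iff₀ hR,
    div_pos_iff_of_pos_right hR2, div_lt_iff₀ hR2, sub_pos, sub_lt_iff_lt_add', zero_add, one_pow,
    mul_one, one_mul]
  rw [show R * (1 / 2) = R / 2 by ring, show 1 / 2 * R ^ 2 = R ^ 2 / 2 by ring]

theorem mem_parabolicAnnulus_one_zero {n : ℕ} {y : EuclideanSpace ℝ (Fin n)} {σ : ℝ} :
    (y, σ) ∈ parabolicAnnulus n 1 0 ↔
      (‖y‖ < 1 ∧ 0 < σ ∧ σ < 1) ∧ ¬(‖y‖ < 1 / 2 ∧ 0 < σ ∧ σ < 1 / 2) := by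
  simp [parabolicAnnulus]

section CutoffBounds

variable {n : ℕ} {φ : EuclideanSpace ℝ (Fin n) → ℝ} {ψ : ℝ → ℝ}

theorem norm_mem_Ico_of_laplacian_ne_zero (hφball : tsupport φ ⊆ Metric.ball 0 1)
    (hφone : ∀ x ∈ Metric.ball (0 : EuclideanSpace ℝ (Fin n)) (1 / 2), φ x = 1) {y}
    (hy : Δ φ y ≠ 0) : ‖y‖ ∈ Ico (1 / 2) 1 := by
  constructor
  · by_contra! h
    refine hy (laplacian_eq_zero_of_eventuallyEq_const (c := 1) ?_)
    filter_upwards [Metric.isOpen_ball.mem_nhds (mem_ball_zero_iff.mpr h)] with x hx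
    exact hφone x hx
  · by_contra! h
    refine hy (laplacian_eq_zero_of_eventuallyEq_const (c := 0) ?_)
    exact notMem_tsupport_iff_eventuallyEq.mp fun hy' =>
      h.not_gt (mem_ball_zero_iff.mp (hφball hy'))

theorem mem_Ico_of_deriv_ne_zero (hψball : tsupport ψ ⊆ Ioo (-1) 1)
    (hψone : ∀ t ∈ Ico (0 : ℝ) (1 / 2), ψ t = 1) {σ : ℝ} (hσ : 0 < σ) (h : deriv ψ σ ≠ 0) :
    σ ∈ Ico (1 / 2) 1 := by
  constructor
  · by_contra! h'
    refine h ((Filter.EventuallyEq.deriv_eq (f := fun _ => (1 : ℝ)) ?_).trans (deriv_const _ _))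
    filter_upwards [isOpen_Ioo.mem_nhds ⟨hσ, h'⟩] with t ht
    exact hψone t ⟨ht.1.le, ht.2⟩
  · exact (hψball (support_deriv_subset h)).2

variable {γ M z σ : ℝ} {m : ℕ} {y : EuclideanSpace ℝ (Fin n)}

theorem time_term_le_indicator (hφ0 : ∀ x, 0 ≤ φ x) (hφ1 : ∀ x, φ x ≤ 1) (hψ0 : ∀ t, 0 ≤ ψ t)
    (hψ1 : ∀ t, ψ t ≤ 1) (hφball : tsupport φ ⊆ Metric.ball 0 1)
    (hψball : tsupport ψ ⊆ Ioo (-1) 1) (hψone : ∀ t ∈ Ico (0 : ℝ) (1 / 2), ψ t = 1)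
    (hγ : 0 ≤ γ) (hγm : γ + 1 ≤ m) (hM : ∀ s, ‖deriv ψ s‖ ≤ M)
    (hz0 : 0 ≤ z) (hz1 : z ≤ 1) (hzσ : z ≠ 0 → 0 < σ) :
    m * φ y ^ m * ψ σ ^ (m - 1) * (-deriv ψ σ) * z ≤
      m * M * (parabolicAnnulus n 1 0).indicator (fun p => φ p.1 ^ γ * ψ p.2 ^ γ) (y, σ) := by
  have hm : 1 ≤ m := by exact_mod_cast (show (1 : ℝ) ≤ m by linarith)
  by_cases hq : (y, σ) ∈ parabolicAnnulus n 1 0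
  · rw [indicator_of_mem hq]
    have hγm' : γ ≤ ((m - 1 : ℕ) : ℝ) := by push_cast [Nat.cast_sub hm]; linarith
    have hφ := pow_le_rpow_of_le_one (hφ0 y) (hφ1 y) hγ (j := m) (by linarith)
    have hψ := pow_le_rpow_of_le_one (hψ0 σ) (hψ1 σ) hγ hγm'
    have hd : -deriv ψ σ ≤ M := (neg_le_abs _).trans (hM σ)
    have hM0 : 0 ≤ M := (norm_nonneg _).trans (hM 0)
    have hc : 0 ≤ (m : ℝ) * φ y ^ m * ψ σ ^ (m - 1) :=
      mul_nonneg (mul_nonneg m.cast_nonneg (pow_nonneg (hφ0 y) _)) (pow_nonneg (hψ0 σ) _)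
    calc m * φ y ^ m * ψ σ ^ (m - 1) * (-deriv ψ σ) * z
        ≤ m * φ y ^ m * ψ σ ^ (m - 1) * M * 1 := by
          gcongr
      _ = m * M * (φ y ^ m * ψ σ ^ (m - 1)) := by ring
      _ ≤ m * M * (φ y ^ γ * ψ σ ^ γ) :=
        mul_le_mul_of_nonneg_left (mul_le_mul hφ hψ (pow_nonneg (hψ0 σ) _)
          (Real.rpow_nonneg (hφ0 y) γ)) (mul_nonneg m.cast_nonneg hM0)
  · rw [indicator_of_notMem hq, mul_zero]
    refine le_of_eq (by_contra fun h => hq ?_)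
    obtain ⟨⟨⟨⟨-, hφy⟩, -⟩, hd⟩, hz⟩ := by simpa only [ne_eq, mul_eq_zero, not_or] using h
    have hσ := mem_Ico_of_deriv_ne_zero hψball hψone (hzσ hz) (by simpa using hd)
    refine mem_parabolicAnnulus_one_zero.mpr
      ⟨⟨?_, hzσ hz, hσ.2⟩, fun h' => by linarith [h'.2.2, hσ.1]⟩
    exact mem_ball_zero_iff.mp (hφball (subset_tsupport φ (ne_zero_pow (by omega) hφy)))

theorem space_term_le_indicator (hφ0 : ∀ x, 0 ≤ φ x) (hφ1 : ∀ x, φ x ≤ 1) (hψ0 : ∀ t, 0 ≤ ψ t)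
    (hψ1 : ∀ t, ψ t ≤ 1) (hφball : tsupport φ ⊆ Metric.ball 0 1)
    (hφone : ∀ x ∈ Metric.ball (0 : EuclideanSpace ℝ (Fin n)) (1 / 2), φ x = 1)
    (hψball : tsupport ψ ⊆ Ioo (-1) 1) (hγ : 0 ≤ γ) (hγm : γ + 1 ≤ m) (hM : ∀ x, ‖Δ φ x‖ ≤ M)
    (hz0 : 0 ≤ z) (hz1 : z ≤ 1) (hzσ : z ≠ 0 → 0 < σ) :
    m * φ y ^ (m - 1) * (-Δ φ y) * ψ σ ^ m * z ≤
      m * M * (parabolicAnnulus n 1 0).indicator (fun p => φ p.1 ^ γ * ψ p.2 ^ γ) (y, σ) := by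
  have hm : 1 ≤ m := by exact_mod_cast (show (1 : ℝ) ≤ m by linarith)
  by_cases hq : (y, σ) ∈ parabolicAnnulus n 1 0
  · rw [indicator_of_mem hq]
    have hγm' : γ ≤ ((m - 1 : ℕ) : ℝ) := by push_cast [Nat.cast_sub hm]; linarith
    have hφ := pow_le_rpow_of_le_one (hφ0 y) (hφ1 y) hγ hγm'
    have hψ := pow_le_rpow_of_le_one (hψ0 σ) (hψ1 σ) hγ (j := m) (by linarith)
    have hΔ : -Δ φ y ≤ M := (neg_le_abs _).trans (hM y)
    have hM0 : 0 ≤ M := (norm_nonneg _).trans (hM 0)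
    have hc : 0 ≤ (m : ℝ) * φ y ^ (m - 1) :=
      mul_nonneg m.cast_nonneg (pow_nonneg (hφ0 y) _)
    calc m * φ y ^ (m - 1) * (-Δ φ y) * ψ σ ^ m * z
        ≤ m * φ y ^ (m - 1) * M * ψ σ ^ m * 1 := by
          have := pow_nonneg (hψ0 σ) m
          gcongr
      _ = m * M * (φ y ^ (m - 1) * ψ σ ^ m) := by ring
      _ ≤ m * M * (φ y ^ γ * ψ σ ^ γ) :=
        mul_le_mul_of_nonneg_left (mul_le_mul hφ hψ (pow_nonneg (hψ0 σ) _)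
          (Real.rpow_nonneg (hφ0 y) γ)) (mul_nonneg m.cast_nonneg hM0)
  · rw [indicator_of_notMem hq, mul_zero]
    refine le_of_eq (by_contra fun h => hq ?_)
    obtain ⟨⟨⟨⟨-, -⟩, hΔ⟩, hψσ⟩, hz⟩ := by simpa only [ne_eq, mul_eq_zero, not_or] using h
    have hy := norm_mem_Ico_of_laplacian_ne_zero hφball hφone (by simpa using hΔ)
    refine mem_parabolicAnnulus_one_zero.mpr
      ⟨⟨hy.2, hzσ hz, (hψball (subset_tsupport ψ (ne_zero_pow (by omega) hψσ))).2⟩, fun h' => ?_⟩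
    linarith [h'.1, hy.1]

end CutoffBounds

noncomputable def parabolicCutoff {n : ℕ} (φ : EuclideanSpace ℝ (Fin n) → ℝ) (ψ z : ℝ → ℝ) (m : ℕ)
    (R t₀ : ℝ) : EuclideanSpace ℝ (Fin n) × ℝ → ℝ :=
  fun q => φ (R⁻¹ • q.1) ^ m * (ψ ((q.2 - t₀) / R ^ 2) ^ m * z q.2)

section ParabolicCutoff

variable {n : ℕ} {φ : EuclideanSpace ℝ (Fin n) → ℝ} {ψ z : ℝ → ℝ} {m : ℕ} {R t₀ : ℝ}

theorem parabolicCutoff_isTestOn (hφ : ContDiff ℝ (⊤ : ℕ∞) φ) (hψ : ContDiff ℝ (⊤ : ℕ∞) ψ)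
    (hz : ContDiff ℝ (⊤ : ℕ∞) z) (hφball : tsupport φ ⊆ Metric.ball 0 1)
    (hψball : tsupport ψ ⊆ Ioo (-1) 1) (hzt₀ : ∀ t ≤ t₀, z t = 0) (hm : m ≠ 0) (hR : 0 < R)
    (ht₀ : 0 < t₀) : IsTestOn n (parabolicCutoff φ ψ z m R t₀) := by
  set K : Set (EuclideanSpace ℝ (Fin n) × ℝ) := Metric.closedBall 0 R ×ˢ Icc t₀ (t₀ + R ^ 2)
  have hK : IsCompact K := (isCompact_closedBall _ _).prod isCompact_Icc
  have hsupp : Function.support (parabolicCutoff φ ψ z m R t₀) ⊆ K := by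
    rintro ⟨x, t⟩ h
    obtain ⟨hφx, hψt, hzt⟩ : φ (R⁻¹ • x) ≠ 0 ∧ ψ ((t - t₀) / R ^ 2) ≠ 0 ∧ z t ≠ 0 := by
      simpa [parabolicCutoff, hm] using h
    have hx := mem_ball_zero_iff.mp (hφball (subset_tsupport φ hφx))
    have ht := (hψball (subset_tsupport ψ hψt)).2
    rw [norm_smul, norm_inv, Real.norm_eq_abs, abs_of_pos hR, inv_mul_lt_iff₀ hR, mul_one] at hx
    rw [div_lt_one (by positivity)] at ht
    exact ⟨mem_closedBall_zero_iff.mpr hx.le,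
      (not_le.mp fun h => hzt (hzt₀ t h)).le, by linarith⟩
  have htsupp : tsupport (parabolicCutoff φ ψ z m R t₀) ⊆ K :=
    closure_minimal hsupp hK.isClosed
  refine ⟨?_, hK.of_isClosed_subset (isClosed_tsupport _) htsupp, fun q hq => ?_⟩
  · unfold parabolicCutoff
    fun_prop
  · exact ht₀.trans_le (htsupp hq).2.1

theorem heatAdjoint_parabolicCutoff_le_add (hφ : ContDiff ℝ (⊤ : ℕ∞) φ) (hψ : Differentiable ℝ ψ)
    (hz : Differentiable ℝ z) (hzmono : Monotone z) (hz0 : ∀ t, 0 ≤ z t) (hφ0 : ∀ x, 0 ≤ φ x)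
    (hψ0 : ∀ t, 0 ≤ ψ t) (x : EuclideanSpace ℝ (Fin n)) (t : ℝ) :
    heatAdjoint n (parabolicCutoff φ ψ z m R t₀) (x, t) ≤
      (R ^ 2)⁻¹ * (m * φ (R⁻¹ • x) ^ m * ψ ((t - t₀) / R ^ 2) ^ (m - 1) *
          (-deriv ψ ((t - t₀) / R ^ 2)) * z t +
        m * φ (R⁻¹ • x) ^ (m - 1) * (-Δ φ (R⁻¹ • x)) * ψ ((t - t₀) / R ^ 2) ^ m * z t) := by
  set y := R⁻¹ • x
  set σ := (t - t₀) / R ^ 2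
  have hφ2 : ContDiff ℝ 2 φ := hφ.of_le (WithTop.coe_le_coe.mpr le_top)
  have hA : ContDiff ℝ 2 fun x : EuclideanSpace ℝ (Fin n) => φ (R⁻¹ • x) ^ m := by fun_prop
  have hb : HasDerivAt (fun t => ψ ((t - t₀) / R ^ 2)) (deriv ψ σ * (1 / R ^ 2)) t :=
    (hψ σ).hasDerivAt.comp t (by simpa using ((hasDerivAt_id t).sub_const t₀).div_const (R ^ 2))
  have htime := neg_deriv_pow_mul_le hb.differentiableAt (hz t) (hψ0 σ) hzmono.deriv_nonneg m
  rw [hb.deriv] at htime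
  have hspace : R⁻¹ ^ 2 * (m * φ y ^ (m - 1) * Δ φ y) ≤ Δ (fun x => φ (R⁻¹ • x) ^ m) x := by
    rw [laplacian_comp_smul (g := fun y => φ y ^ m) (hφ2.pow m)]
    exact mul_le_mul_of_nonneg_left (laplacian_pow_ge hφ2 (hφ0 y) m) (sq_nonneg _)
  have hΘ0 : 0 ≤ ψ σ ^ m * z t := mul_nonneg (pow_nonneg (hψ0 σ) m) (hz0 t)
  refine (heatAdjoint_mul_separated hA (fun t => ψ ((t - t₀) / R ^ 2) ^ m * z t) (x, t)).trans_le ?_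
  calc -(φ y ^ m * deriv (fun t => ψ ((t - t₀) / R ^ 2) ^ m * z t) t) -
        Δ (fun x => φ (R⁻¹ • x) ^ m) x * (ψ σ ^ m * z t)
      ≤ φ y ^ m * -(m * ψ σ ^ (m - 1) * (deriv ψ σ * (1 / R ^ 2)) * z t) -
        R⁻¹ ^ 2 * (m * φ y ^ (m - 1) * Δ φ y) * (ψ σ ^ m * z t) := by
        rw [neg_mul_eq_mul_neg]
        exact sub_le_sub (mul_le_mul_of_nonneg_left htime (pow_nonneg (hφ0 y) m))
          (mul_le_mul_of_nonneg_right hspace hΘ0)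
    _ = _ := by ring

theorem heatAdjoint_parabolicCutoff_le (hφ : ContDiff ℝ (⊤ : ℕ∞) φ) (hψ : ContDiff ℝ (⊤ : ℕ∞) ψ)
    (hz : Differentiable ℝ z) (hzmono : Monotone z) (hz0 : ∀ t, 0 ≤ z t) (hz1 : ∀ t, z t ≤ 1)
    (hzt₀ : ∀ t ≤ t₀, z t = 0) (hφ0 : ∀ x, 0 ≤ φ x) (hφ1 : ∀ x, φ x ≤ 1) (hψ0 : ∀ t, 0 ≤ ψ t)
    (hψ1 : ∀ t, ψ t ≤ 1) (hφball : tsupport φ ⊆ Metric.ball 0 1)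
    (hφone : ∀ x ∈ Metric.ball (0 : EuclideanSpace ℝ (Fin n)) (1 / 2), φ x = 1)
    (hψball : tsupport ψ ⊆ Ioo (-1) 1) (hψone : ∀ t ∈ Ico (0 : ℝ) (1 / 2), ψ t = 1)
    {γ : ℝ} (hγ : 0 ≤ γ) (hγm : γ + 1 ≤ m) {M₁ M₂ : ℝ} (hM₁ : ∀ s, ‖deriv ψ s‖ ≤ M₁)
    (hM₂ : ∀ x, ‖Δ φ x‖ ≤ M₂) (hR : 0 < R) (q : EuclideanSpace ℝ (Fin n) × ℝ) :
    heatAdjoint n (parabolicCutoff φ ψ z m R t₀) q ≤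
      m * (M₁ + M₂) / R ^ 2 * (parabolicAnnulus n R t₀).indicator
        (fun q => φ (R⁻¹ • q.1) ^ γ * ψ ((q.2 - t₀) / R ^ 2) ^ γ) q := by
  obtain ⟨x, t⟩ := q
  have hzσ : z t ≠ 0 → 0 < (t - t₀) / R ^ 2 := fun h =>
    div_pos (sub_pos.mpr (not_le.mp fun ht => h (hzt₀ t ht))) (by positivity)
  have hT := time_term_le_indicator (y := R⁻¹ • x) hφ0 hφ1 hψ0 hψ1 hφball hψball hψone hγ hγm
    hM₁ (hz0 t) (hz1 t) hzσ
  have hS := space_term_le_indicator (y := R⁻¹ • x) hφ0 hφ1 hψ0 hψ1 hφball hφone hψball hγ hγm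
    hM₂ (hz0 t) (hz1 t) hzσ
  have hind : (parabolicAnnulus n R t₀).indicator
      (fun q => φ (R⁻¹ • q.1) ^ γ * ψ ((q.2 - t₀) / R ^ 2) ^ γ) (x, t) =
      (parabolicAnnulus n 1 0).indicator (fun p => φ p.1 ^ γ * ψ p.2 ^ γ)
        (R⁻¹ • x, (t - t₀) / R ^ 2) := by
    rw [parabolicAnnulus_eq_preimage hR t₀, ← indicator_comp_right]
    rfl
  refine (heatAdjoint_parabolicCutoff_le_add hφ (hψ.differentiable (by simp)) hz hzmono hz0 hφ0
    hψ0 x t).trans ((mul_le_mul_of_nonneg_left (add_le_add hT hS) (by positivity)).trans_eq ?_)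
  rw [hind]
  ring

end ParabolicCutoff

theorem setLIntegral_mul_parabolicCutoff_le {n : ℕ} {v f : EuclideanSpace ℝ (Fin n) → ℝ → ℝ}
    (hvpos : ∀ x t, 0 ≤ v x t) (hfpos : ∀ x t, 0 ≤ f x t)
    (hfloc : LocallyIntegrableOn (fun q : EuclideanSpace ℝ (Fin n) × ℝ => f q.1 q.2)
      {q | 0 < q.2})
    (hineq : DistribHeatGe n v f) {φ : EuclideanSpace ℝ (Fin n) → ℝ} {ψ z : ℝ → ℝ}
    (hφ : ContDiff ℝ (⊤ : ℕ∞) φ) (hψ : ContDiff ℝ (⊤ : ℕ∞) ψ) (hz : ContDiff ℝ (⊤ : ℕ∞) z)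
    (hzmono : Monotone z) (hz0 : ∀ t, 0 ≤ z t) (hz1 : ∀ t, z t ≤ 1)
    (hφball : tsupport φ ⊆ Metric.ball 0 1) (hψball : tsupport ψ ⊆ Ioo (-1) 1)
    (hφ0 : ∀ x, 0 ≤ φ x) (hφ1 : ∀ x, φ x ≤ 1) (hψ0 : ∀ t, 0 ≤ ψ t) (hψ1 : ∀ t, ψ t ≤ 1)
    (hφone : ∀ x ∈ Metric.ball (0 : EuclideanSpace ℝ (Fin n)) (1 / 2), φ x = 1)
    (hψone : ∀ t ∈ Ico (0 : ℝ) (1 / 2), ψ t = 1) {β : ℝ} (hβ : 2 < β) {m : ℕ}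
    (hβm : β - 1 ≤ m) {M₁ M₂ : ℝ} (hM₁ : ∀ s, ‖deriv ψ s‖ ≤ M₁) (hM₂ : ∀ x, ‖Δ φ x‖ ≤ M₂)
    {R t₀ : ℝ} (hR : 0 < R) (ht₀ : 0 < t₀) (hzt₀ : ∀ t ≤ t₀, z t = 0) :
    ∫⁻ q in {q : EuclideanSpace ℝ (Fin n) × ℝ | 0 < q.2},
        ENNReal.ofReal (f q.1 q.2 * parabolicCutoff φ ψ z m R t₀ q) ≤
      ENNReal.ofReal (m * (M₁ + M₂) / R ^ 2) *
        ∫⁻ q in parabolicAnnulus n R t₀, ENNReal.ofReal (v q.1 q.2 *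
          (φ (R⁻¹ • q.1) ^ β * ψ ((q.2 - t₀) / R ^ 2) ^ β) ^ ((β - 2) / β)) := by
  set χ := parabolicCutoff φ ψ z m R t₀
  have hm : m ≠ 0 := by rintro rfl; norm_num at hβm; linarith
  have hχ : IsTestOn n χ := parabolicCutoff_isTestOn hφ hψ hz hφball hψball hzt₀ hm hR ht₀
  have hχ0 : ∀ q, 0 ≤ χ q := fun q =>
    mul_nonneg (pow_nonneg (hφ0 _) m) (mul_nonneg (pow_nonneg (hψ0 _) m) (hz0 _))
  have hfχ : IntegrableOn (fun q => f q.1 q.2 * χ q) {q | 0 < q.2} :=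
    hfloc.integrableOn_mul_of_tsupport_subset hχ.1.continuous hχ.2.1 hχ.2.2
  have hC : 0 ≤ m * (M₁ + M₂) / R ^ 2 := by
    have := (norm_nonneg _).trans (hM₁ 0)
    have := (norm_nonneg _).trans (hM₂ 0)
    positivity
  have hH : ∀ q, heatAdjoint n χ q ≤ m * (M₁ + M₂) / R ^ 2 * (parabolicAnnulus n R t₀).indicator
      (fun q => (φ (R⁻¹ • q.1) ^ β * ψ ((q.2 - t₀) / R ^ 2) ^ β) ^ ((β - 2) / β)) q := by
    simpa only [rpow_mul_rpow_rpow_div (hφ0 _) (hψ0 _) (by linarith : β ≠ 0)] using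
      heatAdjoint_parabolicCutoff_le hφ hψ (hz.differentiable (by simp)) hzmono hz0 hz1 hzt₀
        hφ0 hφ1 hψ0 hψ1 hφball hφone hψball hψone (γ := β - 2) (by linarith) (by linarith)
        hM₁ hM₂ hR
  calc ∫⁻ q in {q : EuclideanSpace ℝ (Fin n) × ℝ | 0 < q.2}, ENNReal.ofReal (f q.1 q.2 * χ q)
      = ENNReal.ofReal (∫ q in {q : EuclideanSpace ℝ (Fin n) × ℝ | 0 < q.2}, f q.1 q.2 * χ q) :=
        (ofReal_integral_eq_lintegral_ofReal hfχ
          (ae_of_all _ fun q => mul_nonneg (hfpos _ _) (hχ0 q))).symm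
    _ ≤ ENNReal.ofReal (∫ q in {q : EuclideanSpace ℝ (Fin n) × ℝ | 0 < q.2},
          v q.1 q.2 * heatAdjoint n χ q) :=
        ENNReal.ofReal_le_ofReal (hineq χ hχ hχ0)
    _ ≤ ∫⁻ q in {q : EuclideanSpace ℝ (Fin n) × ℝ | 0 < q.2},
          ENNReal.ofReal (v q.1 q.2 * heatAdjoint n χ q) :=
        ofReal_integral_le_lintegral_ofReal _
    _ ≤ _ := setLIntegral_ofReal_mul_le_of_le_indicator (fun q => hvpos _ _) hC hH

theorem truncated_cutoff_test_function_estimate {n : ℕ} {v f : EuclideanSpace ℝ (Fin n) → ℝ → ℝ}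
    (hvpos : ∀ x t, 0 ≤ v x t) (hfpos : ∀ x t, 0 ≤ f x t)
    (hfloc : LocallyIntegrableOn (fun q : EuclideanSpace ℝ (Fin n) × ℝ => f q.1 q.2)
      {q | 0 < q.2})
    (hineq : DistribHeatGe n v f) {φ : EuclideanSpace ℝ (Fin n) → ℝ} {ψ : ℝ → ℝ}
    (hφ : ContDiff ℝ (⊤ : ℕ∞) φ) (hψ : ContDiff ℝ (⊤ : ℕ∞) ψ)
    (hφball : tsupport φ ⊆ Metric.ball 0 1) (hψball : tsupport ψ ⊆ Ioo (-1) 1)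
    (hφ0 : ∀ x, 0 ≤ φ x) (hφ1 : ∀ x, φ x ≤ 1) (hψ0 : ∀ t, 0 ≤ ψ t) (hψ1 : ∀ t, ψ t ≤ 1)
    (hφone : ∀ x ∈ Metric.ball (0 : EuclideanSpace ℝ (Fin n)) (1 / 2), φ x = 1)
    (hψone : ∀ t ∈ Ico (0 : ℝ) (1 / 2), ψ t = 1) {β : ℝ} (hβ : 2 < β) {m : ℕ} (hmβ : m ≤ β)
    (hβm : β - 1 ≤ m) {M₁ M₂ : ℝ} (hM₁ : ∀ s, ‖deriv ψ s‖ ≤ M₁) (hM₂ : ∀ x, ‖Δ φ x‖ ≤ M₂)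
    {R t₀ δ : ℝ} (hR : 0 < R) (ht₀ : 0 < t₀) (hδ : 0 < δ) :
    ∫⁻ q in {q : EuclideanSpace ℝ (Fin n) × ℝ | t₀ + δ ≤ q.2},
        ENNReal.ofReal (f q.1 q.2 * φ (R⁻¹ • q.1) ^ β * ψ ((q.2 - t₀) / R ^ 2) ^ β) ≤
      ENNReal.ofReal (m * (M₁ + M₂) / R ^ 2) *
        ∫⁻ q in parabolicAnnulus n R t₀, ENNReal.ofReal (v q.1 q.2 *
          (φ (R⁻¹ • q.1) ^ β * ψ ((q.2 - t₀) / R ^ 2) ^ β) ^ ((β - 2) / β)) := by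
  set z : ℝ → ℝ := fun t => Real.smoothTransition ((t - t₀) / δ)
  have hzmono : Monotone z := Real.smoothTransition.monotone.comp fun s t hst =>
    div_le_div_of_nonneg_right (sub_le_sub_right hst t₀) hδ.le
  have hzt₀ : ∀ t ≤ t₀, z t = 0 := fun t ht =>
    Real.smoothTransition.zero_of_nonpos (div_nonpos_of_nonpos_of_nonneg (by linarith) hδ.le)
  have hcut : ∀ q ∈ {q : EuclideanSpace ℝ (Fin n) × ℝ | t₀ + δ ≤ q.2},
      f q.1 q.2 * φ (R⁻¹ • q.1) ^ β * ψ ((q.2 - t₀) / R ^ 2) ^ β ≤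
        f q.1 q.2 * parabolicCutoff φ ψ z m R t₀ q := by
    intro q (hq : t₀ + δ ≤ q.2)
    have hzq : z q.2 = 1 :=
      Real.smoothTransition.one_of_one_le ((le_div_iff₀ hδ).mpr (by linarith))
    rw [mul_assoc, parabolicCutoff, hzq, mul_one]
    exact mul_le_mul_of_nonneg_left (mul_le_mul (rpow_le_pow_of_le_one (hφ0 _) (hφ1 _) hmβ)
      (rpow_le_pow_of_le_one (hψ0 _) (hψ1 _) hmβ) (Real.rpow_nonneg (hψ0 _) _)
      (pow_nonneg (hφ0 _) _)) (hfpos _ _)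
  calc _ ≤ ∫⁻ q in {q : EuclideanSpace ℝ (Fin n) × ℝ | t₀ + δ ≤ q.2},
          ENNReal.ofReal (f q.1 q.2 * parabolicCutoff φ ψ z m R t₀ q) :=
        setLIntegral_mono' (measurableSet_le measurable_const measurable_snd)
          fun q hq => ENNReal.ofReal_le_ofReal (hcut q hq)
    _ ≤ ∫⁻ q in {q : EuclideanSpace ℝ (Fin n) × ℝ | 0 < q.2},
          ENNReal.ofReal (f q.1 q.2 * parabolicCutoff φ ψ z m R t₀ q) :=
        lintegral_mono_set fun q (hq : t₀ + δ ≤ q.2) => show 0 < q.2 by linarith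
    _ ≤ _ := setLIntegral_mul_parabolicCutoff_le hvpos hfpos hfloc hineq hφ hψ (by fun_prop)
        hzmono (fun _ => Real.smoothTransition.nonneg _) (fun _ => Real.smoothTransition.le_one _)
        hφball hψball hφ0 hφ1 hψ0 hψ1 hφone hψone hβ hβm hM₁ hM₂ hR ht₀ hzt₀

theorem cutoff_test_function_estimate_general (n : ℕ)
    (v f : EuclideanSpace ℝ (Fin n) → ℝ → ℝ)
    (hvpos : ∀ (x : EuclideanSpace ℝ (Fin n)) (t : ℝ), 0 ≤ v x t)
    (hfpos : ∀ (x : EuclideanSpace ℝ (Fin n)) (t : ℝ), 0 ≤ f x t)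
    (hfloc : LocallyIntegrableOn
      (fun q : EuclideanSpace ℝ (Fin n) × ℝ => f q.1 q.2)
      {q : EuclideanSpace ℝ (Fin n) × ℝ | 0 < q.2})
    (hineq : DistribHeatGe n v f)
    (φ : EuclideanSpace ℝ (Fin n) → ℝ) (ψ : ℝ → ℝ)
    (hφsmooth : ContDiff ℝ (⊤ : ℕ∞) φ) (hψsmooth : ContDiff ℝ (⊤ : ℕ∞) ψ)
    (hφsupp : HasCompactSupport φ) (hψsupp : HasCompactSupport ψ)
    (hφball : tsupport φ ⊆ Metric.ball (0 : EuclideanSpace ℝ (Fin n)) 1)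
    (hψball : tsupport ψ ⊆ Set.Ioo (-1 : ℝ) 1)
    (hφ0 : ∀ x, 0 ≤ φ x) (hφ1 : ∀ x, φ x ≤ 1)
    (hψ0 : ∀ t, 0 ≤ ψ t) (hψ1 : ∀ t, ψ t ≤ 1)
    (hφone : ∀ x ∈ Metric.ball (0 : EuclideanSpace ℝ (Fin n)) (1 / 2), φ x = 1)
    (hψone : ∀ t ∈ Set.Ico (0 : ℝ) (1 / 2), ψ t = 1)
    (β : ℝ) (hβ : 2 < β) :
    ∃ C : ℝ, 0 < C ∧ ∀ R t₀ : ℝ, 1 < R → 0 < t₀ →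
      (∫⁻ q in {q : EuclideanSpace ℝ (Fin n) × ℝ | t₀ < q.2},
        ENNReal.ofReal (f q.1 q.2 * (φ (R⁻¹ • q.1) ^ β) * (ψ ((q.2 - t₀) / R ^ 2) ^ β))) ≤
      ENNReal.ofReal (C / R ^ 2) *
        ∫⁻ q in (Metric.ball (0 : EuclideanSpace ℝ (Fin n)) R ×ˢ Set.Ioo t₀ (t₀ + R ^ 2)) \
            (Metric.ball (0 : EuclideanSpace ℝ (Fin n)) (R / 2) ×ˢ
              Set.Ioo t₀ (t₀ + R ^ 2 / 2)),
          ENNReal.ofReal (v q.1 q.2 *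
            ((φ (R⁻¹ • q.1) ^ β * ψ ((q.2 - t₀) / R ^ 2) ^ β) ^ ((β - 2) / β))) := by
  obtain ⟨M₁, hM₁⟩ := (hψsmooth.continuous_deriv (WithTop.coe_le_coe.mpr le_top)
    ).bounded_above_of_compact_support hψsupp.deriv
  obtain ⟨M₂, hM₂⟩ := (hφsmooth.of_le (WithTop.coe_le_coe.mpr le_top)).continuous_laplacian
    |>.bounded_above_of_compact_support hφsupp.laplacian
  have hM : 0 ≤ M₁ + M₂ :=
    add_nonneg ((norm_nonneg _).trans (hM₁ 0)) ((norm_nonneg _).trans (hM₂ 0))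
  have hmβ : (⌊β⌋₊ : ℝ) ≤ β := Nat.floor_le (by linarith)
  have hβm : β - 1 ≤ ⌊β⌋₊ := by linarith [Nat.lt_floor_add_one β]
  refine ⟨⌊β⌋₊ * (M₁ + M₂) + 1, by positivity, fun R t₀ hR ht₀ =>
    setLIntegral_lt_le_of_forall_add_le measurable_snd fun δ hδ => ?_⟩
  refine (truncated_cutoff_test_function_estimate hvpos hfpos hfloc hineq hφsmooth hψsmooth
    hφball hψball hφ0 hφ1 hψ0 hψ1 hφone hψone hβ hmβ hβm hM₁ hM₂ (by linarith) ht₀ hδ).trans ?_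
  gcongr ENNReal.ofReal (?_ / _) * _
  linarith

theorem cutoff_test_function_estimate (n : ℕ) (hn : 1 ≤ n)
    (v f : EuclideanSpace ℝ (Fin n) → ℝ → ℝ)
    (hvpos : ∀ (x : EuclideanSpace ℝ (Fin n)) (t : ℝ), 0 ≤ v x t)
    (hfpos : ∀ (x : EuclideanSpace ℝ (Fin n)) (t : ℝ), 0 ≤ f x t)
    (hvloc : LocallyIntegrableOn
      (fun q : EuclideanSpace ℝ (Fin n) × ℝ => v q.1 q.2)
      {q : EuclideanSpace ℝ (Fin n) × ℝ | 0 < q.2})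
    (hfloc : LocallyIntegrableOn
      (fun q : EuclideanSpace ℝ (Fin n) × ℝ => f q.1 q.2)
      {q : EuclideanSpace ℝ (Fin n) × ℝ | 0 < q.2})
    (hineq : DistribHeatGe n v f)
    (φ : EuclideanSpace ℝ (Fin n) → ℝ) (ψ : ℝ → ℝ)
    (hφsmooth : ContDiff ℝ (⊤ : ℕ∞) φ) (hψsmooth : ContDiff ℝ (⊤ : ℕ∞) ψ)
    (hφsupp : HasCompactSupport φ) (hψsupp : HasCompactSupport ψ)
    (hφball : tsupport φ ⊆ Metric.ball (0 : EuclideanSpace ℝ (Fin n)) 1)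
    (hψball : tsupport ψ ⊆ Set.Ioo (-1 : ℝ) 1)
    (hφ0 : ∀ x, 0 ≤ φ x) (hφ1 : ∀ x, φ x ≤ 1)
    (hψ0 : ∀ t, 0 ≤ ψ t) (hψ1 : ∀ t, ψ t ≤ 1)
    (hφone : ∀ x ∈ Metric.ball (0 : EuclideanSpace ℝ (Fin n)) (1 / 2), φ x = 1)
    (hψone : ∀ t ∈ Set.Ico (0 : ℝ) (1 / 2), ψ t = 1)
    (β : ℝ) (hβ : 2 < β) :
    ∃ C : ℝ, 0 < C ∧ ∀ R t₀ : ℝ, 1 < R → 0 < t₀ →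
      (∫⁻ q in {q : EuclideanSpace ℝ (Fin n) × ℝ | t₀ < q.2},
        ENNReal.ofReal (f q.1 q.2 * (φ (R⁻¹ • q.1) ^ β) * (ψ ((q.2 - t₀) / R ^ 2) ^ β))) ≤
      ENNReal.ofReal (C / R ^ 2) *
        ∫⁻ q in (Metric.ball (0 : EuclideanSpace ℝ (Fin n)) R ×ˢ Set.Ioo t₀ (t₀ + R ^ 2)) \
            (Metric.ball (0 : EuclideanSpace ℝ (Fin n)) (R / 2) ×ˢ
              Set.Ioo t₀ (t₀ + R ^ 2 / 2)),
          ENNReal.ofReal (v q.1 q.2 *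
            ((φ (R⁻¹ • q.1) ^ β * ψ ((q.2 - t₀) / R ^ 2) ^ β) ^ ((β - 2) / β))) :=
  cutoff_test_function_estimate_general n v f hvpos hfpos hfloc hineq φ ψ hφsmooth hψsmooth hφsupp
    hψsupp hφball hψball hφ0 hφ1 hψ0 hψ1 hφone hψone β hβ
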